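/- Let f be M-smooth and m-strongly convex over the PSD cone with condition number κ = M/m and minimizer X*. Define X⁰ = (1/M)·P₊(−∇f(0)). Then ‖X⁰ − X*‖_F² ≤ (κ² − 2/κ + 1)·‖X*‖_F². -/

import Mathlib

open Matrix

noncomputable def vnorm {m : Type*} [Fintype m] (v : m → ℝ) : ℝ :=
  Real.sqrt (∑ i, v i ^ 2)

noncomputable def frob {m n : Type*} [Fintype m] [Fintype n] (A : Matrix m n ℝ) : ℝ :=
  Real.sqrt (∑ i, ∑ j, A i j ^ 2)

/-- The spectral norm (largest singular value) of a real matrix. -/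
noncomputable def specNorm {m n : Type*} [Fintype m] [Fintype n] (A : Matrix m n ℝ) : ℝ :=
  sSup {c | ∃ x : n → ℝ, vnorm x = 1 ∧ c = vnorm (A.mulVec x)}

/-- The smallest singular value of a real matrix. -/
noncomputable def sigMin {m n : Type*} [Fintype m] [Fintype n] (A : Matrix m n ℝ) : ℝ :=
  sInf {c | ∃ x : n → ℝ, vnorm x = 1 ∧ c = vnorm (A.mulVec x)}

/-- `Dist U V`: the infimum of `‖U - V R‖_F` over orthogonal `R`. -/
noncomputable def FDist {n r : Type*} [Fintype n] [Fintype r] [DecidableEq r]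
    (U V : Matrix n r ℝ) : ℝ :=
  sInf {c | ∃ R : Matrix r r ℝ, Rᵀ * R = 1 ∧ c = frob (U - V * R)}

theorem Matrix.isHermitian_transpose_mul_self {m n α : Type*} [Fintype m] [NonUnitalSemiring α]
    [StarRing α] [TrivialStar α] (A : Matrix m n α) : (Aᵀ * A).IsHermitian := by
  rw [← Matrix.conjTranspose_eq_transpose_of_trivial]
  exact Matrix.isHermitian_conjTranspose_mul_self A

/-- The `i`-th largest singular value of a real matrix. -/
noncomputable def singVal {n m : ℕ} (A : Matrix (Fin n) (Fin m) ℝ) (i : Fin m) : ℝ :=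
  Real.sqrt ((Matrix.isHermitian_transpose_mul_self A).eigenvalues
    ((Tuple.sort (Matrix.isHermitian_transpose_mul_self A).eigenvalues) i.rev))

/-! The projection `Y` of `-∇f(0)` onto the cone satisfies `⟪-∇f(0) - Y, W - Y⟫ ≤ 0` for every
`W` in the cone, and optimality of `X*` gives `⟪∇f(X*), Z - X*⟫ ≥ 0` for every `Z` in the cone.
Testing these with `W = 0, Y + X*` and `Z = X* + Y, 0` yields `‖Y‖² ≤ ⟪∇f(X*) - ∇f(0), Y⟫`, hence
`‖Y‖ ≤ M‖X*‖` by smoothness, and `⟪∇f(X*) - ∇f(0), X*⟫ ≤ ⟪Y, X*⟫`, hence `m‖X*‖² ≤ ⟪Y, X*⟫` by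
strong convexity. Expanding `‖Y/M - X*‖²` then gives even `2(1 - 1/κ)‖X*‖²`. Matrices carry the
Frobenius inner product `⟪A, B⟫ = tr(AᵀB)`. -/

open Set
open scoped RealInnerProductSpace

section InnerProductSpace

variable {E : Type*} [NormedAddCommGroup E] [InnerProductSpace ℝ E]

theorem IsMinOn.nonneg_of_hasDerivAt_segment {K : Set E} (hK : Convex ℝ K) {f : E → ℝ}
    {x z : E} {d : ℝ} (hmin : IsMinOn f K x) (hx : x ∈ K) (hz : z ∈ K)
    (hd : HasDerivAt (fun t : ℝ => f (x + t • (z - x))) d 0) : 0 ≤ d := by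
  have hmin' : IsMinOn (fun t : ℝ => f (x + t • (z - x))) (Icc 0 1) 0 := fun t ht => by
    simpa using hmin (hK.add_smul_sub_mem hx hz ht)
  have hone : (1 : ℝ) - 0 ∈ posTangentConeAt (Icc (0 : ℝ) 1) 0 :=
    sub_mem_posTangentConeAt_of_segment_subset (segment_eq_Icc zero_le_one).subset
  simpa using hmin'.localize.hasFDerivWithinAt_nonneg hd.hasDerivWithinAt.hasFDerivWithinAt hone

theorem IsMinOn.inner_sub_sub_nonpos {K : Set E} (hK : Convex ℝ K) {u y : E}
    (hmin : IsMinOn (fun z => ‖u - z‖) K y) (hy : y ∈ K) {w : E} (hw : w ∈ K) :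
    ⟪u - y, w - y⟫ ≤ 0 := by
  have : Nonempty K := ⟨⟨y, hy⟩⟩
  refine (norm_eq_iInf_iff_real_inner_le_zero hK hy).1 ?_ w hw
  exact le_antisymm (le_ciInf fun z => hmin z.2)
    (ciInf_le ⟨0, forall_mem_range.2 fun _ => norm_nonneg _⟩ (⟨y, hy⟩ : K))

theorem norm_le_of_norm_sq_le_inner {v y : E} (h : ‖y‖ ^ 2 ≤ ⟪v, y⟫) : ‖y‖ ≤ ‖v‖ := by
  have := h.trans (real_inner_le_norm v y)
  nlinarith [norm_nonneg y, norm_nonneg v]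

theorem mul_norm_sub_sq_le_inner_sub_sub {K : Set E} {f : E → ℝ} {g : E → E} {m : ℝ}
    (hsc : ∀ x ∈ K, ∀ y ∈ K, f x + ⟪g x, y - x⟫ + m / 2 * ‖y - x‖ ^ 2 ≤ f y)
    {x y : E} (hx : x ∈ K) (hy : y ∈ K) : m * ‖x - y‖ ^ 2 ≤ ⟪g x - g y, x - y⟫ := by
  have hxy := hsc x hx y hy
  have hyx := hsc y hy x hx
  rw [← neg_sub x y, norm_neg, inner_neg_right] at hxy
  rw [inner_sub_left]
  linarith

theorem norm_inv_smul_sub_sq_le_of_le_inner {x y : E} {m M : ℝ} (hm : 0 < m) (hmM : m ≤ M)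
    (hy : ‖y‖ ≤ M * ‖x‖) (hxy : m * ‖x‖ ^ 2 ≤ ⟪y, x⟫) :
    ‖M⁻¹ • y - x‖ ^ 2 ≤ 2 * (1 - m / M) * ‖x‖ ^ 2 := by
  have hM : 0 < M := hm.trans_le hmM
  have hnorm : ‖M⁻¹ • y‖ ≤ ‖x‖ := by
    rw [norm_smul, norm_inv, Real.norm_of_nonneg hM.le, inv_mul_le_iff₀ hM]; exact hy
  have hinner : m / M * ‖x‖ ^ 2 ≤ ⟪M⁻¹ • y, x⟫ := by
    rw [real_inner_smul_left, div_mul_eq_mul_div, div_eq_inv_mul]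
    exact mul_le_mul_of_nonneg_left hxy (inv_nonneg.2 hM.le)
  rw [norm_sub_sq_real]
  nlinarith [norm_nonneg (M⁻¹ • y), norm_nonneg x]

theorem PointedCone.norm_inv_smul_sub_sq_le (K : PointedCone ℝ E) {m M : ℝ}
    (hm : 0 < m) (hmM : m ≤ M) {f : E → ℝ} {g : E → E}
    (hsmooth : ∀ x ∈ K, ∀ y ∈ K, ‖g x - g y‖ ≤ M * ‖x - y‖)
    (hsc : ∀ x ∈ K, ∀ y ∈ K, f x + ⟪g x, y - x⟫ + m / 2 * ‖y - x‖ ^ 2 ≤ f y)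
    {xs : E} (hxs : xs ∈ K) (hopt : IsMinOn f K xs)
    (hgrad : ∀ h, HasDerivAt (fun t : ℝ => f (xs + t • h)) ⟪g xs, h⟫ 0)
    {y : E} (hy : y ∈ K) (hproj : IsMinOn (fun z => ‖-g 0 - z‖) K y) :
    ‖M⁻¹ • y - xs‖ ^ 2 ≤ 2 * (1 - m / M) * ‖xs‖ ^ 2 := by
  have hfoc {z : E} (hz : z ∈ K) : 0 ≤ ⟪g xs, z - xs⟫ :=
    hopt.nonneg_of_hasDerivAt_segment K.convex hxs hz (hgrad _)
  have hvi {w : E} (hw : w ∈ K) : ⟪-g 0 - y, w - y⟫ ≤ 0 :=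
    hproj.inner_sub_sub_nonpos K.convex hy hw
  have hy_le : ‖y‖ ≤ M * ‖xs‖ := by
    have h₁ : 0 ≤ ⟪g xs, y⟫ := by simpa using hfoc (K.add_mem hxs hy)
    have h₂ : ‖y‖ ^ 2 ≤ ⟪-g 0, y⟫ := by
      have := hvi K.zero_mem
      rw [zero_sub, inner_neg_right, inner_sub_left, real_inner_self_eq_norm_sq] at this
      linarith
    calc ‖y‖ ≤ ‖g xs - g 0‖ := by
          refine norm_le_of_norm_sq_le_inner ?_
          rw [sub_eq_add_neg, inner_add_left]
          linarith
      _ ≤ M * ‖xs‖ := by simpa using hsmooth xs hxs 0 K.zero_mem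
  have hxy : m * ‖xs‖ ^ 2 ≤ ⟪y, xs⟫ := by
    have h₁ : ⟪-g 0 - y, xs⟫ ≤ 0 := by simpa using hvi (K.add_mem hy hxs)
    have h₂ : ⟪g xs, xs⟫ ≤ 0 := by simpa using hfoc K.zero_mem
    have h₃ := mul_norm_sub_sq_le_inner_sub_sub hsc hxs K.zero_mem
    rw [sub_zero, sub_eq_add_neg (g xs), inner_add_left] at h₃
    rw [inner_sub_left] at h₁
    linarith
  exact norm_inv_smul_sub_sq_le_of_le_inner hm hmM hy_le hxy

end InnerProductSpace

namespace Matrix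

def posSemidefCone (n : Type*) [Fintype n] : PointedCone ℝ (Matrix n n ℝ) where
  carrier := {A | A.PosSemidef}
  add_mem' := PosSemidef.add
  zero_mem' := PosSemidef.zero
  smul_mem' c _ hA := hA.smul c.2

variable {m n : Type*} [Fintype m] [Fintype n]

noncomputable abbrev frobeniusInnerProductCore : InnerProductSpace.Core ℝ (Matrix m n ℝ) where
  inner A B := (Aᵀ * B).trace
  conj_inner_symm A B := by
    rw [conj_trivial, ← trace_transpose, transpose_mul, transpose_transpose]
  re_inner_nonneg A := by
    simpa using (posSemidef_conjTranspose_mul_self A).trace_nonneg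
  add_left A B C := by rw [transpose_add, Matrix.add_mul, trace_add]
  smul_left A B r := by simp
  definite A h := trace_conjTranspose_mul_self_eq_zero_iff.1 h

noncomputable abbrev frobeniusInnerNormedAddCommGroup : NormedAddCommGroup (Matrix m n ℝ) :=
  frobeniusInnerProductCore.toNormedAddCommGroup

attribute [local instance] frobeniusInnerNormedAddCommGroup

noncomputable abbrev frobeniusInnerProductSpace : InnerProductSpace ℝ (Matrix m n ℝ) :=
  InnerProductSpace.ofCore frobeniusInnerProductCore.toCore

attribute [local instance] frobeniusInnerProductSpace

theorem trace_transpose_mul_eq_inner (A B : Matrix m n ℝ) : (Aᵀ * B).trace = ⟪A, B⟫ := rfl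

theorem frob_eq_norm (A : Matrix m n ℝ) : frob A = ‖A‖ := by
  show _ = √(RCLike.re (Aᵀ * A).trace)
  simp only [frob, trace, mul_apply, RCLike.re_to_real, sq, diag_apply, transpose_apply]
  rw [Finset.sum_comm]

end Matrix

/-- Initialization guarantee: for `M`-smooth, `m`-strongly convex `f` over the PSD
cone with minimizer `X*` and `X⁰ = (1/M) P₊(-∇f(0))`,
`‖X⁰ - X*‖_F² ≤ (κ² - 2/κ + 1) ‖X*‖_F²` where `κ = M/m`. -/
theorem stmt7 {n : ℕ} (M m : ℝ) (hm : 0 < m) (hmM : m ≤ M)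
    (f : Matrix (Fin n) (Fin n) ℝ → ℝ)
    (g : Matrix (Fin n) (Fin n) ℝ → Matrix (Fin n) (Fin n) ℝ)
    (hgrad : ∀ X H : Matrix (Fin n) (Fin n) ℝ,
      HasDerivAt (fun t : ℝ => f (X + t • H)) (((g X)ᵀ * H).trace) 0)
    (hsmooth : ∀ X Y : Matrix (Fin n) (Fin n) ℝ, X.PosSemidef → Y.PosSemidef →
      frob (g X - g Y) ≤ M * frob (X - Y))
    (hsc : ∀ X Y : Matrix (Fin n) (Fin n) ℝ, X.PosSemidef → Y.PosSemidef →
      f X + ((g X)ᵀ * (Y - X)).trace + m / 2 * frob (Y - X) ^ 2 ≤ f Y)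
    (Xstar : Matrix (Fin n) (Fin n) ℝ) (hXstar : Xstar.PosSemidef)
    (hopt : ∀ Z : Matrix (Fin n) (Fin n) ℝ, Z.PosSemidef → f Xstar ≤ f Z)
    (Y : Matrix (Fin n) (Fin n) ℝ) (hY : Y.PosSemidef)
    (hproj : ∀ Z : Matrix (Fin n) (Fin n) ℝ, Z.PosSemidef →
      frob (-(g 0) - Y) ≤ frob (-(g 0) - Z)) :
    frob ((1 / M) • Y - Xstar) ^ 2 ≤
      ((M / m) ^ 2 - 2 / (M / m) + 1) * frob Xstar ^ 2 := by
  let _ := frobeniusInnerNormedAddCommGroup (m := Fin n) (n := Fin n)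
  let _ := frobeniusInnerProductSpace (m := Fin n) (n := Fin n)
  have hsharp := (posSemidefCone (Fin n)).norm_inv_smul_sub_sq_le hm hmM
    (fun A hA B hB => by simpa only [frob_eq_norm] using hsmooth A B hA hB)
    (fun A hA B hB => by
      simpa only [frob_eq_norm, trace_transpose_mul_eq_inner] using hsc A B hA hB)
    hXstar hopt (hgrad Xstar) hY
    (isMinOn_iff.2 fun Z hZ => by simpa only [frob_eq_norm] using hproj Z hZ)
  have hκ : 2 * (1 - m / M) ≤ (M / m) ^ 2 - 2 / (M / m) + 1 := by
    have : 1 ≤ (M / m) ^ 2 := one_le_pow₀ ((one_le_div hm).2 hmM)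
    rw [div_div_eq_mul_div, mul_div_assoc]
    linarith
  rw [one_div, frob_eq_norm, frob_eq_norm]
  exact hsharp.trans (mul_le_mul_of_nonneg_right hκ (sq_nonneg _))
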